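/- arXiv:1808.04701 — 7 statements merged into one kernel-verified Lean document; each statement's English description precedes it below -/
import Mathlib

section
/- Let μ be a probability measure on ℝ with μ((-∞,0)) = 0 and finite first moment ∫ a dμ(a) < ∞, whose cumulative distribution function F is continuous, and let F̄(r) = μ((r,∞)). Define the supplier's expected payoff g(r) = r·∫ (a − r)⁺ dμ(a) for r ≥ 0. If r* ≥ 0 maximizes g over [0,∞) and g(r*) > 0, then r* satisfies the fixed point equation r* = m(r*), where m(r) = (∫_r^∞ F̄(u) du)/F̄(r) is the mean residual life function of μ at r. -/
open MeasureTheory Set Filter Topology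

/-!
Write `H(r) = E[(α - r)⁺]`, so that the payoff is `r * H r`. For `r ≤ s` the increment
`H r - H s` lies between `(s - r) * F̄ s` and `(s - r) * F̄ r`, and this is all the first-order
condition at the maximizer `r* > 0` needs: comparing `r*` with prices slightly above and slightly
below it gives `H r* = r* * F̄ r*`. The layer cake formula identifies `H r*` with `∫_{r*}^∞ F̄`,
and dividing by `F̄ r* ≠ 0` (forced by `H r* > 0`) yields `r* = m r*`.
-/

noncomputable def stopLoss (μ : Measure ℝ) (r : ℝ) : ℝ := ∫ a, max (a - r) 0 ∂μ

lemma stopLoss_nonneg (μ : Measure ℝ) (r : ℝ) : 0 ≤ stopLoss μ r :=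
  integral_nonneg fun _ => le_max_right _ _

lemma indicator_Ioi_le_max_sub_sub_max_sub {r s : ℝ} (hrs : r ≤ s) (a : ℝ) :
    (Ioi s).indicator (fun _ => s - r) a ≤ max (a - r) 0 - max (a - s) 0 := by
  by_cases ha : s < a
  · rw [indicator_of_mem (mem_Ioi.2 ha), max_eq_left (by linarith), max_eq_left (by linarith)]
    linarith
  · rw [indicator_of_notMem (ha ∘ mem_Ioi.1)]
    linarith [max_le_max_right 0 (sub_le_sub_left hrs a)]

lemma max_sub_sub_max_sub_le_indicator_Ioi (r s a : ℝ) :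
    max (a - r) 0 - max (a - s) 0 ≤ (Ioi r).indicator (fun _ => s - r) a := by
  by_cases ha : r < a
  · rw [indicator_of_mem (mem_Ioi.2 ha), max_eq_left (by linarith)]
    linarith [le_max_left (a - s) 0]
  · rw [indicator_of_notMem (ha ∘ mem_Ioi.1), max_eq_right (by linarith)]
    linarith [le_max_right (a - s) 0]

lemma integral_indicator_Ioi_const (μ : Measure ℝ) (c t : ℝ) :
    ∫ a, (Ioi t).indicator (fun _ => c) a ∂μ = c * μ.real (Ioi t) := by
  rw [integral_indicator_const c measurableSet_Ioi, smul_eq_mul, mul_comm]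

section StopLoss

variable {μ : Measure ℝ} [IsFiniteMeasure μ]

lemma integrable_max_sub_const (hμ : Integrable (fun a : ℝ => a) μ) (r : ℝ) :
    Integrable (fun a => max (a - r) 0) μ :=
  (hμ.sub (integrable_const r)).pos_part

lemma stopLoss_sub_stopLoss (hμ : Integrable (fun a : ℝ => a) μ) (r s : ℝ) :
    stopLoss μ r - stopLoss μ s = ∫ a, (max (a - r) 0 - max (a - s) 0) ∂μ :=
  (integral_sub (integrable_max_sub_const hμ r) (integrable_max_sub_const hμ s)).symm

lemma mul_measureReal_Ioi_le_stopLoss_sub (hμ : Integrable (fun a : ℝ => a) μ) {r s : ℝ}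
    (hrs : r ≤ s) : (s - r) * μ.real (Ioi s) ≤ stopLoss μ r - stopLoss μ s := by
  rw [stopLoss_sub_stopLoss hμ, ← integral_indicator_Ioi_const]
  exact integral_mono ((integrable_const _).indicator measurableSet_Ioi)
    ((integrable_max_sub_const hμ r).sub (integrable_max_sub_const hμ s))
    (indicator_Ioi_le_max_sub_sub_max_sub hrs)

lemma stopLoss_sub_le_mul_measureReal_Ioi (hμ : Integrable (fun a : ℝ => a) μ) (r s : ℝ) :
    stopLoss μ r - stopLoss μ s ≤ (s - r) * μ.real (Ioi r) := by
  rw [stopLoss_sub_stopLoss hμ, ← integral_indicator_Ioi_const]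
  exact integral_mono ((integrable_max_sub_const hμ r).sub (integrable_max_sub_const hμ s))
    ((integrable_const _).indicator measurableSet_Ioi)
    (max_sub_sub_max_sub_le_indicator_Ioi r s)

lemma stopLoss_eq_integral_measureReal_Ioi (hμ : Integrable (fun a : ℝ => a) μ) (r : ℝ) :
    stopLoss μ r = ∫ u in Ioi r, μ.real (Ioi u) := by
  have hlevel : ∀ t ∈ Ioi (0 : ℝ), μ.real {a | t < max (a - r) 0} = μ.real (Ioi (r + t)) := by
    intro t ht
    congr 1
    ext a
    simp only [mem_ofPred_eq, mem_Ioi, lt_max_iff]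
    constructor
    · rintro (h | h) <;> linarith [mem_Ioi.1 ht]
    · exact fun h => Or.inl (by linarith)
  rw [stopLoss, (integrable_max_sub_const hμ r).integral_eq_integral_meas_lt
      (.of_forall fun _ => le_max_right _ _), setIntegral_congr_fun measurableSet_Ioi hlevel,
    ← (measurePreserving_add_left volume r).setIntegral_preimage_emb
      (measurableEmbedding_addLeft r) (fun u => μ.real (Ioi u)) (Ioi r),
    preimage_const_add_Ioi, sub_self]

end StopLoss

/-- `c` plays the role of `-H'(r)`, so this is the first-order condition `(s * H s)' = 0` at `r`. -/
lemma eq_mul_of_isMaxOn_mul {H : ℝ → ℝ} {r c : ℝ} (hr : 0 < r)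
    (hmax : IsMaxOn (fun s => s * H s) (Ici 0) r)
    (hleft : ∀ s ≤ r, (r - s) * c ≤ H s - H r)
    (hright : ∀ s, r ≤ s → H r - H s ≤ (s - r) * c) :
    H r = r * c := by
  have hcont : Tendsto (fun s => s * c) (𝓝 r) (𝓝 (r * c)) := tendsto_id.mul_const c
  apply le_antisymm
  · refine ge_of_tendsto (x := 𝓝[>] r) (hcont.mono_left nhdsWithin_le_nhds) ?_
    filter_upwards [self_mem_nhdsWithin] with s (hs : r < s)
    have hs_max : s * H s ≤ r * H r := isMaxOn_iff.1 hmax s (mem_Ici.2 (by linarith))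
    have : (s - r) * H r ≤ (s - r) * (s * c) := by nlinarith [hright s hs.le]
    exact le_of_mul_le_mul_left this (sub_pos.2 hs)
  · refine le_of_tendsto (x := 𝓝[<] r) (hcont.mono_left nhdsWithin_le_nhds) ?_
    filter_upwards [Ioo_mem_nhdsLT hr] with s ⟨hs0, hs⟩
    have hs_max : s * H s ≤ r * H r := isMaxOn_iff.1 hmax s (mem_Ici.2 hs0.le)
    have : (r - s) * (s * c) ≤ (r - s) * H r := by nlinarith [hleft s hs.le]
    exact le_of_mul_le_mul_left this (sub_pos.2 hs)

theorem optimal_price_is_mrl_fixed_point_general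
    (μ : Measure ℝ) [IsProbabilityMeasure μ]
    (hmean : Integrable (fun a : ℝ => a) μ)
    (Fbar : ℝ → ℝ) (hFbar : ∀ r, Fbar r = (μ (Set.Ioi r)).toReal)
    (m : ℝ → ℝ) (hm : ∀ r, m r = (∫ u in Set.Ioi r, Fbar u) / Fbar r)
    (g : ℝ → ℝ) (hg : ∀ r, g r = r * ∫ a, max (a - r) 0 ∂μ)
    (rstar : ℝ)
    (hmax : ∀ r : ℝ, 0 ≤ r → g r ≤ g rstar)
    (hpos : 0 < g rstar) :
    rstar = m rstar := by
  obtain rfl : Fbar = fun r => μ.real (Ioi r) := funext hFbar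
  have hg' : ∀ r, g r = r * stopLoss μ r := hg
  obtain ⟨hr, hH⟩ : 0 < rstar ∧ 0 < stopLoss μ rstar :=
    (pos_and_pos_or_neg_and_neg_of_mul_pos (hg' rstar ▸ hpos)).resolve_right
      fun h => (stopLoss_nonneg μ rstar).not_gt h.2
  have hfoc : stopLoss μ rstar = rstar * μ.real (Ioi rstar) :=
    eq_mul_of_isMaxOn_mul hr (isMaxOn_iff.2 fun s hs => by simpa only [hg'] using hmax s hs)
      (fun _ hs => mul_measureReal_Ioi_le_stopLoss_sub hmean hs)
      (fun s _ => stopLoss_sub_le_mul_measureReal_Ioi hmean rstar s)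
  have hF : μ.real (Ioi rstar) ≠ 0 := right_ne_zero_of_mul (hfoc ▸ hH.ne')
  rw [hm, ← stopLoss_eq_integral_measureReal_Ioi hmean, hfoc, mul_div_cancel_right₀ _ hF]

/-- If the demand `α ∼ μ` is a nonnegative random variable with continuous CDF and
finite mean, and `r* ≥ 0` maximizes the supplier's expected payoff
`g(r) = r * E[(α - r)⁺]` over `[0, ∞)` with `g(r*) > 0`, then `r*` satisfies the
fixed point equation `r* = m(r*)`, where `m` is the mean residual life function. -/
theorem optimal_price_is_mrl_fixed_point
    (μ : Measure ℝ) [IsProbabilityMeasure μ]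
    (hnonneg : μ (Set.Iio 0) = 0)
    (hmean : Integrable (fun a : ℝ => a) μ)
    (hcdf_cont : Continuous (fun x : ℝ => (μ (Set.Iic x)).toReal))
    (Fbar : ℝ → ℝ) (hFbar : ∀ r, Fbar r = (μ (Set.Ioi r)).toReal)
    (m : ℝ → ℝ) (hm : ∀ r, m r = (∫ u in Set.Ioi r, Fbar u) / Fbar r)
    (g : ℝ → ℝ) (hg : ∀ r, g r = r * ∫ a, max (a - r) 0 ∂μ)
    (rstar : ℝ) (hrstar : 0 ≤ rstar)
    (hmax : ∀ r : ℝ, 0 ≤ r → g r ≤ g rstar)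
    (hpos : 0 < g rstar) :
    rstar = m rstar :=
  optimal_price_is_mrl_fixed_point_general μ hmean Fbar hFbar m hm g hg rstar hmax hpos
end

section
/- Fix n ≥ 2 and r* > 0, and define R(α) = (4/((n+2)·α²))·(α − r*)⁺·(α + n·r*) for α > 0 (the ratio of aggregate realized market profits with and without demand uncertainty). Then sup_{α>0} R(α) = 1 + 1/(n² + 2n), and the supremum is attained exactly at α* = (2n/(n−1))·r*. In particular the realized Price of Uncertainty equals 1 + 1/(n² + 2n) independently of the underlying demand distribution, and it exceeds 1 for every n. -/
/-!
For `α ≥ r*` the ratio completes to a square,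
`R(α) = (1 + 1/(n² + 2n)) - ((n - 1)α - 2n r*)² / ((n² + 2n) α²)`,
so it never exceeds `1 + 1/(n² + 2n)` and reaches it exactly where `(n - 1)α = 2n r*`;
for `α ≤ r*` it vanishes.
-/

noncomputable section

namespace PriceOfUncertainty

def profitRatio (n r α : ℝ) : ℝ :=
  4 / ((n + 2) * α ^ 2) * max (α - r) 0 * (α + n * r)

def bound (n : ℝ) : ℝ := 1 + 1 / (n ^ 2 + 2 * n)

variable {n r α : ℝ}

lemma one_lt_bound (hn : 0 < n) : 1 < bound n := by
  unfold bound
  have : 0 < 1 / (n ^ 2 + 2 * n) := by positivity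
  linarith

lemma profitRatio_of_le (h : α ≤ r) : profitRatio n r α = 0 := by
  simp only [profitRatio, max_eq_right (sub_nonpos.mpr h), mul_zero, zero_mul]

lemma profitRatio_eq_bound_sub_sq (hn : 0 < n) (hα : α ≠ 0) (h : r ≤ α) :
    profitRatio n r α = bound n - ((n - 1) * α - 2 * n * r) ^ 2 / ((n ^ 2 + 2 * n) * α ^ 2) := by
  have hn2 : n + 2 ≠ 0 := by positivity
  have hnn : n ^ 2 + 2 * n ≠ 0 := by positivity
  rw [profitRatio, bound, max_eq_left (sub_nonneg.mpr h)]
  field_simp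
  ring

lemma profitRatio_le_bound (hn : 0 < n) (hα : 0 < α) : profitRatio n r α ≤ bound n := by
  rcases le_or_gt α r with h | h
  · rw [profitRatio_of_le h]
    exact zero_le_one.trans (one_lt_bound hn).le
  · rw [profitRatio_eq_bound_sub_sq hn hα.ne' h.le]
    have : 0 ≤ ((n - 1) * α - 2 * n * r) ^ 2 / ((n ^ 2 + 2 * n) * α ^ 2) := by positivity
    linarith

lemma profitRatio_eq_bound_iff (hn : 1 < n) (hr : 0 < r) (hα : 0 < α) :
    profitRatio n r α = bound n ↔ α = 2 * n / (n - 1) * r := by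
  have hn0 : 0 < n := by linarith
  have hn1 : n - 1 ≠ 0 := by linarith
  have hnn : (n ^ 2 + 2 * n) * α ^ 2 ≠ 0 := by positivity
  rw [div_mul_eq_mul_div, eq_div_iff hn1, mul_comm α]
  constructor
  · intro heq
    have hrα : r < α := by
      by_contra! hle
      rw [profitRatio_of_le hle] at heq
      linarith [one_lt_bound hn0]
    rw [profitRatio_eq_bound_sub_sq hn0 hα.ne' hrα.le, sub_eq_self, div_eq_zero_iff,
      or_iff_left hnn, sq_eq_zero_iff, sub_eq_zero] at heq
    exact heq
  · intro heq
    -- `(n - 1) α = 2 n r` forces `α > r`, since `2 n > n - 1`.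
    have hrα : r ≤ α := by nlinarith
    rw [profitRatio_eq_bound_sub_sq hn0 hα.ne' hrα, heq, sub_self, zero_pow two_ne_zero,
      zero_div, sub_zero]

end PriceOfUncertainty

end

open PriceOfUncertainty in
/-- The realized Price of Uncertainty: for `n ≥ 2` retailers and supplier price
`r* > 0`, the ratio `R(α) = (4/((n+2)α²))·(α - r*)⁺·(α + n·r*)` of aggregate
realized market profits with and without demand uncertainty satisfies
`sup_{α > 0} R(α) = 1 + 1/(n² + 2n)`, attained exactly at `α* = (2n/(n-1))·r*`;
in particular the PoU is independent of the demand distribution and exceeds 1. -/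
theorem price_of_uncertainty
    (n : ℕ) (hn : 2 ≤ n) (rstar : ℝ) (hr : 0 < rstar) :
    ∀ R : ℝ → ℝ,
      R = (fun α : ℝ =>
        (4 / (((n : ℝ) + 2) * α ^ 2)) * max (α - rstar) 0 * (α + (n : ℝ) * rstar)) →
      ∀ αstar : ℝ, αstar = (2 * (n : ℝ) / ((n : ℝ) - 1)) * rstar →
        (∀ α : ℝ, 0 < α → R α ≤ 1 + 1 / ((n : ℝ) ^ 2 + 2 * (n : ℝ))) ∧
        R αstar = 1 + 1 / ((n : ℝ) ^ 2 + 2 * (n : ℝ)) ∧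
        (∀ α : ℝ, 0 < α → R α = 1 + 1 / ((n : ℝ) ^ 2 + 2 * (n : ℝ)) → α = αstar) ∧
        1 < 1 + 1 / ((n : ℝ) ^ 2 + 2 * (n : ℝ)) := by
  rintro R rfl αstar rfl
  have hn1 : (1 : ℝ) < n := by exact_mod_cast hn
  have hαstar : 0 < 2 * (n : ℝ) / (n - 1) * rstar :=
    mul_pos (div_pos (by linarith) (by linarith)) hr
  exact ⟨fun α hα => profitRatio_le_bound (by linarith) hα,
    (profitRatio_eq_bound_iff hn1 hr hαstar).mpr rfl,
    fun α hα => (profitRatio_eq_bound_iff hn1 hr hα).mp,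
    one_lt_bound (by linarith)⟩
end

section
/- Fix n ≥ 2 and r* > 0, and define R(α) = (4/((n+2)·α²))·(α − r*)·(α + n·r*) for α ≥ r*. Then R is strictly increasing on [r*, (2n/(n−1))·r*] and strictly decreasing on [(2n/(n−1))·r*, ∞). -/
/-!
With `t = r* / α`, the ratio is `4/(n+2) · (1 + (n-1)t - n t²)`: an increasing affine image of a
concave quadratic with vertex `t = (n-1)/(2n)`, i.e. `α = 2n r*/(n-1)`. Since `α ↦ r*/α` is
decreasing on `(0, ∞)`, the two monotonicity regimes of the quadratic swap under the substitution.
-/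

open Set

lemma strictMonoOn_sub_mul_sq {a : ℝ} (ha : 0 < a) (b : ℝ) :
    StrictMonoOn (fun t => b * t - a * t ^ 2) (Iic (b / (2 * a))) := by
  intro x hx y hy hxy
  have hx' : 2 * a * x ≤ b := (le_div_iff₀' (by positivity)).mp hx
  have hy' : 2 * a * y ≤ b := (le_div_iff₀' (by positivity)).mp hy
  have hsum : a * (x + y) < b := by nlinarith
  have hdiff : b * y - a * y ^ 2 - (b * x - a * x ^ 2) = (y - x) * (b - a * (x + y)) := by ring
  nlinarith [mul_pos (sub_pos.mpr hxy) (sub_pos.mpr hsum)]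

lemma strictAntiOn_sub_mul_sq {a : ℝ} (ha : 0 < a) (b : ℝ) :
    StrictAntiOn (fun t => b * t - a * t ^ 2) (Ici (b / (2 * a))) := by
  intro x hx y hy hxy
  have hx' : b ≤ 2 * a * x := (div_le_iff₀' (by positivity)).mp hx
  have hy' : b ≤ 2 * a * y := (div_le_iff₀' (by positivity)).mp hy
  have hsum : b < a * (x + y) := by nlinarith
  have hdiff : b * x - a * x ^ 2 - (b * y - a * y ^ 2) = (y - x) * (a * (x + y) - b) := by ring
  nlinarith [mul_pos (sub_pos.mpr hxy) (sub_pos.mpr hsum)]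

lemma div_mul_sub_mul_add_div_sq {α : ℝ} (hα : α ≠ 0) (c r ν : ℝ) :
    c / α ^ 2 * (α - r) * (α + ν * r) = c * (1 + ((ν - 1) * (r / α) - ν * (r / α) ^ 2)) := by
  field_simp
  ring

lemma sub_one_div_two_mul_le_div_iff {ν r α : ℝ} (hν : 1 < ν) (hα : 0 < α) :
    (ν - 1) / (2 * ν) ≤ r / α ↔ α ≤ 2 * ν / (ν - 1) * r := by
  rw [div_le_div_iff₀ (by linarith) hα, div_mul_eq_mul_div, le_div_iff₀ (by linarith)]
  constructor <;> intro h <;> linarith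

lemma div_le_sub_one_div_two_mul_iff {ν r α : ℝ} (hν : 1 < ν) (hα : 0 < α) :
    r / α ≤ (ν - 1) / (2 * ν) ↔ 2 * ν / (ν - 1) * r ≤ α := by
  rw [div_le_div_iff₀ hα (by linarith), div_mul_eq_mul_div, div_le_iff₀ (by linarith)]
  constructor <;> intro h <;> linarith

/-- For `n ≥ 2` and `r* > 0`, the aggregate-profit ratio
`R(α) = (4/((n+2)α²))·(α - r*)·(α + n·r*)` is strictly increasing on
`[r*, (2n/(n-1))·r*]` and strictly decreasing on `[(2n/(n-1))·r*, ∞)`. -/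
theorem aggregate_ratio_unimodal
    (n : ℕ) (hn : 2 ≤ n) (rstar : ℝ) (hr : 0 < rstar) :
    ∀ R : ℝ → ℝ,
      R = (fun α : ℝ =>
        (4 / (((n : ℝ) + 2) * α ^ 2)) * (α - rstar) * (α + (n : ℝ) * rstar)) →
      StrictMonoOn R (Set.Icc rstar ((2 * (n : ℝ) / ((n : ℝ) - 1)) * rstar)) ∧
      StrictAntiOn R (Set.Ici ((2 * (n : ℝ) / ((n : ℝ) - 1)) * rstar)) := by
  rintro R rfl
  have hn' : (1 : ℝ) < n := by exact_mod_cast hn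
  set q : ℝ → ℝ := fun t => ((n : ℝ) - 1) * t - n * t ^ 2
  have hscale : StrictMono fun u : ℝ => 4 / ((n : ℝ) + 2) * (1 + u) :=
    (strictMono_mul_left_of_pos (by positivity)).comp (strictMono_id.const_add 1)
  have hdiv : StrictAntiOn (rstar / ·) (Ioi 0) := fun x hx y _ hxy =>
    div_lt_div_of_pos_left hr hx hxy
  have hR : EqOn ((fun u : ℝ => 4 / ((n : ℝ) + 2) * (1 + u)) ∘ q ∘ (rstar / ·))
      (fun α : ℝ => 4 / (((n : ℝ) + 2) * α ^ 2) * (α - rstar) * (α + n * rstar)) (Ioi 0) :=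
    fun α hα => by
      simp only [Function.comp, q, div_mul_eq_div_div]
      rw [div_mul_sub_mul_add_div_sq (ne_of_gt hα)]
  have hM : 0 < 2 * (n : ℝ) / ((n : ℝ) - 1) * rstar :=
    mul_pos (div_pos (by positivity) (by linarith)) hr
  have hIcc : Icc rstar (2 * (n : ℝ) / ((n : ℝ) - 1) * rstar) ⊆ Ioi 0 :=
    fun α hα => hr.trans_le hα.1
  have hIci : Ici (2 * (n : ℝ) / ((n : ℝ) - 1) * rstar) ⊆ Ioi 0 :=
    fun α hα => hM.trans_le hα
  constructor
  · refine (hscale.comp_strictMonoOn ((strictAntiOn_sub_mul_sq (by linarith) _).comp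
      (hdiv.mono hIcc) fun α hα => ?_)).congr (hR.mono hIcc)
    exact (sub_one_div_two_mul_le_div_iff hn' (hIcc hα)).mpr hα.2
  · refine (hscale.comp_strictAntiOn ((strictMonoOn_sub_mul_sq (by linarith) _).comp_strictAntiOn
      (hdiv.mono hIci) fun α hα => ?_)).congr (hR.mono hIci)
    exact (div_le_sub_one_div_two_mul_iff hn' (hIci hα)).mpr hα
end

section
/- Fix r* > 0 and define R_n(α) = (4/((n+2)·α²))·(α − r*)·(α + n·r*) for α ≥ r*. For n ≥ 3, R_n(α) ≥ 1 if and only if α ∈ [2r*, (2n/(n−2))·r*]; for n = 2, R_2(α) ≥ 1 if and only if α ≥ 2r*. -/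
/-!
Clearing the positive denominator `(n + 2) α²`, `R_n(α) ≥ 1` becomes
`(α - 2r*)((n - 2)α - 2n r*) ≤ 0`. For `n > 2` this quadratic opens upwards with roots
`2r* ≤ 2n r*/(n - 2)`, so it is nonpositive exactly between them; for `n = 2` the second factor
is the constant `-4r* < 0`.
-/

theorem one_le_ratio_iff {n r α : ℝ} (hn : 0 < n + 2) (hα : α ≠ 0) :
    1 ≤ 4 / ((n + 2) * α ^ 2) * (α - r) * (α + n * r) ↔
      (α - 2 * r) * ((n - 2) * α - 2 * n * r) ≤ 0 := by
  rw [div_mul_eq_mul_div, div_mul_eq_mul_div, le_div_iff₀ (by positivity), one_mul,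
    ← sub_nonneg]
  have hquad : 4 * (α - r) * (α + n * r) - (n + 2) * α ^ 2 =
      -((α - 2 * r) * ((n - 2) * α - 2 * n * r)) := by ring
  rw [hquad, neg_nonneg]

theorem quadratic_nonpos_iff_of_two_lt {n r α : ℝ} (hn : 2 < n) (hr : 0 ≤ r) :
    (α - 2 * r) * ((n - 2) * α - 2 * n * r) ≤ 0 ↔
      2 * r ≤ α ∧ α ≤ 2 * n / (n - 2) * r := by
  have hn2 : 0 < n - 2 := sub_pos.mpr hn
  have hroots : 2 * r ≤ 2 * n / (n - 2) * r := by
    gcongr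
    rw [le_div_iff₀ hn2]
    linarith
  have hfactor : (α - 2 * r) * ((n - 2) * α - 2 * n * r) =
      (n - 2) * ((α - 2 * r) * (α - 2 * n / (n - 2) * r)) := by
    field_simp
  rw [hfactor, ← sub_mul_sub_nonpos_iff α hroots, ← neg_nonneg, ← mul_neg,
    mul_nonneg_iff_of_pos_left hn2, neg_nonneg]

theorem quadratic_nonpos_iff_of_eq_two {r α : ℝ} (hr : 0 < r) :
    (α - 2 * r) * ((2 - 2) * α - 2 * 2 * r) ≤ 0 ↔ 2 * r ≤ α := by
  have hlin : (2 - 2) * α - 2 * 2 * r = -(4 * r) := by ring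
  rw [hlin, mul_neg, neg_nonpos, mul_nonneg_iff_of_pos_right (by positivity), sub_nonneg]

/-- Where the aggregate-profit ratio `R_n(α) = (4/((n+2)α²))·(α - r*)·(α + n·r*)`
(for `α ≥ r*`) is at least 1: for `n ≥ 3`, `R_n(α) ≥ 1` iff
`α ∈ [2r*, (2n/(n-2))·r*]`; for `n = 2`, `R_2(α) ≥ 1` iff `α ≥ 2r*`. -/
theorem ratio_exceeds_one_range
    (rstar : ℝ) (hr : 0 < rstar)
    (R : ℕ → ℝ → ℝ)
    (hR : ∀ (n : ℕ) (α : ℝ), R n α =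
      (4 / (((n : ℝ) + 2) * α ^ 2)) * (α - rstar) * (α + (n : ℝ) * rstar)) :
    (∀ n : ℕ, 3 ≤ n → ∀ α : ℝ, rstar ≤ α →
      (1 ≤ R n α ↔ 2 * rstar ≤ α ∧ α ≤ (2 * (n : ℝ) / ((n : ℝ) - 2)) * rstar)) ∧
    (∀ α : ℝ, rstar ≤ α → (1 ≤ R 2 α ↔ 2 * rstar ≤ α)) := by
  refine ⟨fun n hn α hα => ?_, fun α hα => ?_⟩
  · have hn3 : (3 : ℝ) ≤ n := by exact_mod_cast hn
    rw [hR, one_le_ratio_iff (by linarith) (hr.trans_le hα).ne',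
      quadratic_nonpos_iff_of_two_lt (by linarith) hr.le]
  · rw [hR, one_le_ratio_iff (by positivity) (hr.trans_le hα).ne', Nat.cast_ofNat,
      quadratic_nonpos_iff_of_eq_two hr]
end

section
/- Fix r* > 0 and α ≥ r*, and regard R_n(α) = (4/((n+2)·α²))·(α − r*)·(α + n·r*) as a function of the number of retailers n ≥ 2. If α ∈ [r*, 2r*] then R_n(α) is nondecreasing in n, and if α > 2r* then R_n(α) is strictly decreasing in n, in both cases independently of the underlying demand distribution. -/
/-!
Up to the nonnegative factor `4 (α - r*) / α²`, `R_n` is `(α + n r*) / (n + 2) = r* + (α - 2r*) / (n + 2)`,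
so its behaviour in `n` is that of `1 / (n + 2)` scaled by the sign of `α - 2r*`.
-/

open Set

lemma div_add_two_eq_add_mul_inv (a r x : ℝ) (hx : x + 2 ≠ 0) :
    (a + x * r) / (x + 2) = r + (a - 2 * r) * (x + 2)⁻¹ := by
  field_simp
  ring

lemma monotoneOn_div_add_two {a r : ℝ} (h : a ≤ 2 * r) :
    MonotoneOn (fun x : ℝ ↦ (a + x * r) / (x + 2)) (Ioi (-2)) := by
  intro x (hx : -2 < x) y (hy : -2 < y) hxy
  simp only [div_add_two_eq_add_mul_inv a r _ (by linarith : x + 2 ≠ 0),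
    div_add_two_eq_add_mul_inv a r _ (by linarith : y + 2 ≠ 0)]
  gcongr r + ?_
  exact mul_le_mul_of_nonpos_left
    (inv_anti₀ (by linarith) (by linarith)) (by linarith)

lemma strictAntiOn_div_add_two {a r : ℝ} (h : 2 * r < a) :
    StrictAntiOn (fun x : ℝ ↦ (a + x * r) / (x + 2)) (Ioi (-2)) := by
  intro x (hx : -2 < x) y (hy : -2 < y) hxy
  simp only [div_add_two_eq_add_mul_inv a r _ (by linarith : x + 2 ≠ 0),
    div_add_two_eq_add_mul_inv a r _ (by linarith : y + 2 ≠ 0)]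
  gcongr r + ?_
  exact mul_lt_mul_of_pos_left
    (inv_strictAnti₀ (by linarith) (by linarith)) (by linarith)

lemma natCast_mem_Ioi_neg_two (n : ℕ) : (n : ℝ) ∈ Ioi (-2) :=
  mem_Ioi.2 <| (neg_lt_zero.2 two_pos).trans_le n.cast_nonneg

/-- Monotonicity of the aggregate-profit ratio
`R_n(α) = (4/((n+2)α²))·(α - r*)·(α + n·r*)` in the number of retailers `n ≥ 2`:
if `α ∈ [r*, 2r*]` it is nondecreasing in `n`, and if `α > 2r*` it is strictly
decreasing in `n`, independently of the underlying demand distribution. -/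
theorem ratio_monotone_in_n
    (rstar α : ℝ) (hr : 0 < rstar) (hα : rstar ≤ α)
    (R : ℕ → ℝ)
    (hR : ∀ n : ℕ, R n =
      (4 / (((n : ℝ) + 2) * α ^ 2)) * (α - rstar) * (α + (n : ℝ) * rstar)) :
    (α ≤ 2 * rstar → ∀ m n : ℕ, 2 ≤ m → m ≤ n → R m ≤ R n) ∧
    (2 * rstar < α → ∀ m n : ℕ, 2 ≤ m → m < n → R n < R m) := by
  set f := fun x : ℝ ↦ (α + x * rstar) / (x + 2)
  have hRf : ∀ n : ℕ, R n = 4 * (α - rstar) / α ^ 2 * f n := fun n ↦ by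
    simp only [hR, f, div_eq_mul_inv, mul_inv]
    ring
  refine ⟨fun h m n _ hmn ↦ ?_, fun h m n _ hmn ↦ ?_⟩
  · rw [hRf, hRf]
    have hαr : 0 ≤ α - rstar := sub_nonneg.2 hα
    refine mul_le_mul_of_nonneg_left ?_ (by positivity)
    exact monotoneOn_div_add_two h (natCast_mem_Ioi_neg_two m)
      (natCast_mem_Ioi_neg_two n) (Nat.cast_le.2 hmn)
  · rw [hRf, hRf]
    have hαr : 0 < α - rstar := by linarith
    have hα0 : 0 < α := by linarith
    refine mul_lt_mul_of_pos_left ?_ (by positivity)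
    exact strictAntiOn_div_add_two h (natCast_mem_Ioi_neg_two m)
      (natCast_mem_Ioi_neg_two n) (Nat.cast_lt.2 hmn)
end

section
/- Fix n ≥ 1 and r* > 0, and define the ratio ρ(α) = ((n+1)²/n)·(n + α/r*)^{-1} for α > r* (the integrated firm's realized profit divided by the decentralized chain's aggregate realized profit). Then ρ(α) < 1 + 1/n for every α > r*, ρ is strictly decreasing on (r*, ∞), and ρ(α) → 1 + 1/n as α → r*⁺; hence the realized Price of Anarchy sup_{α > r*} ρ(α) equals 1 + 1/n independently of the underlying demand distribution. -/
/-!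
On `α ≥ 0` the ratio `ρ(α) = c · (n + α/r*)⁻¹`, `c = (n+1)²/n > 0`, is a positive multiple of the
reciprocal of an increasing positive affine function, so it is strictly decreasing; it is
continuous at `r*`, where it equals `c / (n+1) = 1 + 1/n`. A function that is decreasing on
`[r*, ∞)` and right-continuous at `r*` has `ρ(r*)` as least upper bound of its values on `(r*, ∞)`.
-/

open Set Filter Topology

theorem AntitoneOn.isLUB_image_Ioi {α β : Type*} [TopologicalSpace α] [LinearOrder α]
    [OrderTopology α] [DenselyOrdered α] [NoMaxOrder α] [TopologicalSpace β] [LinearOrder β]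
    [OrderTopology β] {f : α → β} {a : α} (hf : AntitoneOn f (Ici a))
    (hc : ContinuousWithinAt f (Ioi a) a) : IsLUB (f '' Ioi a) (f a) := by
  refine isLUB_of_mem_closure ?_ (hc.mem_closure_image (by rw [closure_Ioi]; exact self_mem_Ici))
  rintro _ ⟨x, hx, rfl⟩
  exact hf self_mem_Ici (Ioi_subset_Ici_self hx) (le_of_lt hx)

noncomputable def poaRatio (n : ℕ) (rstar α : ℝ) : ℝ :=
  ((n + 1) ^ 2 / n) * (n + α / rstar)⁻¹

theorem poaRatio_self {n : ℕ} (hn : n ≠ 0) {rstar : ℝ} (hr : rstar ≠ 0) :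
    poaRatio n rstar rstar = 1 + 1 / n := by
  have : (n : ℝ) ≠ 0 := Nat.cast_ne_zero.2 hn
  rw [poaRatio, div_self hr]
  field_simp

theorem strictAntiOn_poaRatio {n : ℕ} (hn : n ≠ 0) {rstar : ℝ} (hr : 0 < rstar) :
    StrictAntiOn (poaRatio n rstar) (Ici 0) := by
  intro a ha b _ hab
  have hn₀ : (0 : ℝ) < n := Nat.cast_pos.2 (Nat.pos_of_ne_zero hn)
  have ha₀ : 0 < (n : ℝ) + a / rstar := by
    have : 0 ≤ a / rstar := div_nonneg ha hr.le
    linarith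
  have hlt : (n : ℝ) + a / rstar < n + b / rstar := by
    gcongr
  exact mul_lt_mul_of_pos_left (inv_strictAnti₀ ha₀ hlt) (by positivity)

theorem continuousAt_poaRatio {n : ℕ} {rstar α : ℝ} (h : (n : ℝ) + α / rstar ≠ 0) :
    ContinuousAt (poaRatio n rstar) α := by
  unfold poaRatio
  fun_prop (disch := exact h)

/-- The realized Price of Anarchy: for `n ≥ 1` retailers and supplier price `r* > 0`,
the ratio `ρ(α) = ((n+1)²/n)·(n + α/r*)⁻¹` satisfies `ρ(α) < 1 + 1/n` for all
`α > r*`, is strictly decreasing on `(r*, ∞)`, and tends to `1 + 1/n` as `α → r*⁺`;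
hence `sup_{α > r*} ρ(α) = 1 + 1/n`, independently of the demand distribution. -/
theorem price_of_anarchy
    (n : ℕ) (hn : 1 ≤ n) (rstar : ℝ) (hr : 0 < rstar)
    (ρ : ℝ → ℝ)
    (hρ : ∀ α : ℝ, ρ α = (((n : ℝ) + 1) ^ 2 / (n : ℝ)) * ((n : ℝ) + α / rstar)⁻¹) :
    (∀ α : ℝ, rstar < α → ρ α < 1 + 1 / (n : ℝ)) ∧
    StrictAntiOn ρ (Set.Ioi rstar) ∧
    Filter.Tendsto ρ (nhdsWithin rstar (Set.Ioi rstar)) (nhds (1 + 1 / (n : ℝ))) ∧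
    IsLUB (ρ '' Set.Ioi rstar) (1 + 1 / (n : ℝ)) := by
  obtain rfl : ρ = poaRatio n rstar := funext hρ
  have hn₀ : n ≠ 0 := Nat.one_le_iff_ne_zero.1 hn
  have hanti : StrictAntiOn (poaRatio n rstar) (Ici rstar) :=
    (strictAntiOn_poaRatio hn₀ hr).mono (Ici_subset_Ici.2 hr.le)
  have hcont : ContinuousAt (poaRatio n rstar) rstar :=
    continuousAt_poaRatio (by rw [div_self hr.ne']; positivity)
  rw [← poaRatio_self hn₀ hr.ne']
  exact ⟨fun α hα => hanti self_mem_Ici (le_of_lt hα) hα, hanti.mono Ioi_subset_Ici_self,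
    hcont.tendsto.mono_left nhdsWithin_le_nhds,
    hanti.antitoneOn.isLUB_image_Ioi hcont.continuousWithinAt⟩
end

section
/- For any n ≥ 1 and any demand level α > 0, the ratio of the integrated firm's profit to the decentralized chain's aggregate profit in the deterministic market equals (α/2)² / [(n/(n+1))·(α/2)² + (n/(n+1)²)·(α/2)²] = 1 + 1/(n² + 2n); in particular it is constant in α, so the Price of Anarchy of the deterministic market equals 1 + 1/(n² + 2n), the same value as the realized Price of Uncertainty of the stochastic market. -/
/-!
Every profit in the chain is a multiple of `(α/2)²`: the decentralized chain earns
`(n² + 2n)/(n+1)² · (α/2)²`, so the ratio is `(n+1)²/(n² + 2n) = 1 + 1/(n² + 2n)` for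
every `α`, and the supremum of a constant is that constant.
-/

theorem Set.isLUB_image_of_forall_eq {α β : Type*} [Preorder β] {f : α → β} {s : Set α}
    {c : β} (hs : s.Nonempty) (hf : ∀ a ∈ s, f a = c) : IsLUB (f '' s) c := by
  rw [Set.EqOn.image_eq (f₂ := fun _ => c) fun a ha => hf a ha, hs.image_const]
  exact isLUB_singleton

lemma decentralized_profit_eq {x : ℝ} (hx : x + 1 ≠ 0) (q : ℝ) :
    x / (x + 1) * q + x * (1 / (x + 1) ^ 2 * q) = (x ^ 2 + 2 * x) / (x + 1) ^ 2 * q := by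
  field_simp
  ring

lemma integrated_div_decentralized_profit {x q : ℝ} (hx : 0 < x) (hq : q ≠ 0) :
    q / (x / (x + 1) * q + x * (1 / (x + 1) ^ 2 * q)) = 1 + 1 / (x ^ 2 + 2 * x) := by
  have hx₁ : x + 1 ≠ 0 := by positivity
  have hx₂ : x ^ 2 + 2 * x ≠ 0 := by positivity
  rw [decentralized_profit_eq hx₁]
  field_simp
  ring

/-- In the deterministic market, the ratio of the integrated firm's profit to the
decentralized chain's aggregate profit equals
`(α/2)² / ((n/(n+1))·(α/2)² + n·(1/(n+1)²)·(α/2)²) = 1 + 1/(n² + 2n)` for every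
demand level `α > 0`; in particular it is constant in `α`, so the Price of Anarchy
of the deterministic market equals `1 + 1/(n² + 2n)`, the same value as the
realized Price of Uncertainty of the stochastic market. -/
theorem deterministic_price_of_anarchy
    (n : ℕ) (hn : 1 ≤ n) :
    (∀ α : ℝ, 0 < α →
      (α / 2) ^ 2 /
        (((n : ℝ) / ((n : ℝ) + 1)) * (α / 2) ^ 2 +
          (n : ℝ) * ((1 / ((n : ℝ) + 1) ^ 2) * (α / 2) ^ 2)) =
      1 + 1 / ((n : ℝ) ^ 2 + 2 * (n : ℝ))) ∧
    IsLUB ((fun α : ℝ =>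
      (α / 2) ^ 2 /
        (((n : ℝ) / ((n : ℝ) + 1)) * (α / 2) ^ 2 +
          (n : ℝ) * ((1 / ((n : ℝ) + 1) ^ 2) * (α / 2) ^ 2))) '' Set.Ioi 0)
      (1 + 1 / ((n : ℝ) ^ 2 + 2 * (n : ℝ))) := by
  have hn_pos : (0 : ℝ) < n := by exact_mod_cast hn
  have hratio (α : ℝ) (hα : 0 < α) :=
    integrated_div_decentralized_profit (q := (α / 2) ^ 2) hn_pos (by positivity)
  exact ⟨hratio, Set.isLUB_image_of_forall_eq ⟨1, Set.mem_Ioi.mpr one_pos⟩ hratio⟩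
end
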